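/- arXiv:1903.11055 — 9 statements merged into one kernel-verified Lean document; each statement's English description precedes it below -/
import Mathlib

section
/- Separation lemma: Given d+2 points in ℝ^d in general position (every d+1 of them are affinely independent), there exist d of the points spanning an affine hyperplane that strictly separates the two remaining points. -/
/-! The `d + 2` points are affinely dependent: some weights `w`, not all zero, sum to zero and
satisfy `∑ wₖ • pₖ = 0`, and general position forces every `wₖ ≠ 0`. Two of the (at least three)
weights, `wᵢ` and `wⱼ`, have the same sign. An affine functional `f` vanishing on the other `d`
points but not at `pᵢ` satisfies `∑ wₖ * f pₖ = 0`, i.e. `wᵢ * f pᵢ + wⱼ * f pⱼ = 0`, so `f pᵢ`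
and `f pⱼ` have opposite signs. -/

open Finset Module

section AffineSpace

variable {k V P ι : Type*} [Field k] [AddCommGroup V] [Module k V] [AddTorsor V P]

theorem AffineSubspace.exists_affineMap_eq_zero_of_notMem {A : AffineSubspace k P} {x : P}
    (hx : x ∉ A) : ∃ f : P →ᵃ[k] k, (∀ y ∈ A, f y = 0) ∧ f x ≠ 0 := by
  rcases eq_or_ne A ⊥ with rfl | hA
  · exact ⟨AffineMap.const k P 1, fun y hy => (AffineSubspace.notMem_bot k V y hy).elim,
      one_ne_zero⟩
  obtain ⟨a, ha⟩ := A.nonempty_iff_ne_bot.mpr hA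
  obtain ⟨g, hgx, hg⟩ := Submodule.exists_le_ker_of_notMem
    (mt (AffineSubspace.vsub_right_mem_direction_iff_mem ha x).mp hx)
  refine ⟨g.toAffineMap.comp (AffineEquiv.vaddConst k a).symm.toAffineMap, fun y hy => ?_, hgx⟩
  exact hg (AffineSubspace.vsub_mem_direction hy ha)

theorem AffineMap.linear_weightedVSub {V₂ P₂ : Type*} [AddCommGroup V₂] [Module k V₂]
    [AddTorsor V₂ P₂] (f : P →ᵃ[k] P₂) {s : Finset ι} {w : ι → k} (hw : ∑ i ∈ s, w i = 0)
    (p : ι → P) : f.linear (s.weightedVSub p w) = s.weightedVSub (f ∘ p) w := by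
  obtain ⟨b⟩ := (inferInstance : Nonempty P)
  rw [s.weightedVSub_eq_weightedVSubOfPoint_of_sum_eq_zero w p hw b,
    s.weightedVSub_eq_weightedVSubOfPoint_of_sum_eq_zero w _ hw (f b)]
  simp [Finset.weightedVSubOfPoint_apply, map_sum]

theorem AffineMap.sum_smul_apply_eq_zero {V₂ : Type*} [AddCommGroup V₂] [Module k V₂]
    (f : P →ᵃ[k] V₂) {s : Finset ι} {w : ι → k} {p : ι → P} (hsum : ∑ i ∈ s, w i = 0)
    (hvsub : s.weightedVSub p w = 0) : ∑ i ∈ s, w i • f (p i) = 0 := by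
  have h := f.linear_weightedVSub hsum p
  rwa [hvsub, map_zero, eq_comm, s.weightedVSub_eq_linear_combination hsum] at h

theorem exists_weightedVSub_eq_zero_of_finrank_succ_lt_card [Fintype ι] [FiniteDimensional k V]
    (p : ι → P) (h : finrank k V + 1 < Fintype.card ι) :
    ∃ w : ι → k, ∑ i, w i = 0 ∧ univ.weightedVSub p w = 0 ∧ ∃ i, w i ≠ 0 := by
  have hp : ¬AffineIndependent k p := fun hp =>
    (hp.card_le_finrank_succ.trans (by gcongr; exact Submodule.finrank_le _)).not_gt h
  simpa [affineIndependent_iff_of_fintype] using hp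

theorem AffineIndependent.notMem_affineSpan_image {p : ι → P} {s : Finset ι}
    (hs : AffineIndependent k (fun i : s => p i)) {i : ι} (hi : i ∈ s) {t : Set ι}
    (hts : t ⊆ s) (hit : i ∉ t) : p i ∉ affineSpan k (p '' t) := by
  have himage : (fun j : s => p j) '' (Subtype.val ⁻¹' t) = p '' t := by
    rw [← Set.image_image p Subtype.val, Set.image_preimage_eq_of_subset (by simpa using hts)]
  rw [← himage, hs.mem_affineSpan_iff ⟨i, hi⟩]
  exact hit

theorem AffineIndependent.eq_zero_of_weightedVSub_eq_zero [Fintype ι] {p : ι → P} {s : Finset ι}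
    (hs : AffineIndependent k (fun i : s => p i)) {w : ι → k} (hw : ∀ i ∉ s, w i = 0)
    (hsum : ∑ i, w i = 0) (hvsub : univ.weightedVSub p w = 0) (i : ι) : w i = 0 := by
  by_cases hi : i ∈ s
  swap; · exact hw i hi
  have hws : (s : Set ι).indicator w = w := Set.indicator_eq_self.mpr
    fun j hj => by_contra fun hjs => hj (hw j hjs)
  refine (affineIndependent_iff_of_fintype k _).mp hs (fun j => w j) ?_ ?_ ⟨i, hi⟩
  · rwa [Finset.sum_coe_sort s w, Finset.sum_subset (subset_univ s) fun j _ hj => hw j hj]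
  · have hmap := s.attach.weightedVSub_map (Function.Embedding.subtype (· ∈ s)) w p
    rw [attach_map_val] at hmap
    exact hmap.symm.trans <| by
      rw [Finset.weightedVSub_indicator_subset _ _ (subset_univ s), hws, hvsub]

theorem ne_zero_of_forall_affineIndependent_erase [Fintype ι] [DecidableEq ι] {p : ι → P}
    (hp : ∀ j, AffineIndependent k (fun i : (univ.erase j : Finset ι) => p i)) {w : ι → k}
    (hsum : ∑ i, w i = 0) (hvsub : univ.weightedVSub p w = 0) (hw : ∃ i, w i ≠ 0) (j : ι) :
    w j ≠ 0 := by
  intro hj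
  obtain ⟨i, hi⟩ := hw
  refine hi ((hp j).eq_zero_of_weightedVSub_eq_zero (fun l hl => ?_) hsum hvsub i)
  rwa [show l = j by simpa using hl]

end AffineSpace

section Signs

variable {R ι : Type*} [CommRing R] [LinearOrder R] [IsStrictOrderedRing R]

theorem exists_ne_mul_pos_of_two_lt_card [Fintype ι] (h : 2 < Fintype.card ι) {w : ι → R}
    (hw : ∀ i, w i ≠ 0) : ∃ i j, i ≠ j ∧ 0 < w i * w j := by
  obtain ⟨a, b, c, hab, hac, hbc⟩ := Fintype.two_lt_card_iff.mp h
  by_contra! H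
  have hbc_neg : w b * w c < 0 := (H b c hbc).lt_of_ne (mul_ne_zero (hw b) (hw c))
  have h_nonneg : 0 ≤ (w a * w b) * (w a * w c) :=
    mul_nonneg_of_nonpos_of_nonpos (H a b hab) (H a c hac)
  have h_neg : (w a * w a) * (w b * w c) < 0 :=
    mul_neg_of_pos_of_neg (mul_self_pos.mpr (hw a)) hbc_neg
  linarith [show (w a * w b) * (w a * w c) = (w a * w a) * (w b * w c) by ring]

theorem mul_neg_of_mul_add_mul_eq_zero {a b x y : R} (hab : 0 < a * b) (hx : x ≠ 0)
    (h : a * x + b * y = 0) : x * y < 0 := by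
  have hax : a * x ≠ 0 := mul_ne_zero (left_ne_zero_of_mul hab.ne') hx
  have hprod : a * b * (x * y) = -(a * x) ^ 2 := by linear_combination a * x * h
  exact neg_of_mul_neg_right (hprod ▸ neg_neg_of_pos (by positivity)) hab.le

end Signs

theorem separation_lemma (d : ℕ) (hd : 1 ≤ d) (p : Fin (d + 2) → (Fin d → ℝ))
    (hgen : ∀ s : Finset (Fin (d + 2)), s.card = d + 1 →
      AffineIndependent ℝ (fun i : s => p i)) :
    ∃ (S : Finset (Fin (d + 2))) (i j : Fin (d + 2)),
      S.card = d ∧ i ∉ S ∧ j ∉ S ∧ i ≠ j ∧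
      ∃ f : (Fin d → ℝ) →ᵃ[ℝ] ℝ, (∀ k ∈ S, f (p k) = 0) ∧ f (p i) < 0 ∧ 0 < f (p j) := by
  obtain ⟨w, hsum, hvsub, hw⟩ :=
    exists_weightedVSub_eq_zero_of_finrank_succ_lt_card (k := ℝ) p (by simp)
  have hw_ne :=
    ne_zero_of_forall_affineIndependent_erase (fun j => hgen _ (by simp)) hsum hvsub hw
  obtain ⟨i, j, hij, hpos⟩ :=
    exists_ne_mul_pos_of_two_lt_card (by rw [Fintype.card_fin]; omega) hw_ne
  set S : Finset (Fin (d + 2)) := {i, j}ᶜ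
  have hiS : i ∉ S := by simp [S]
  have hjS : j ∉ S := by simp [S]
  have hScard : S.card = d := by rw [card_compl, card_pair hij, Fintype.card_fin]; rfl
  obtain ⟨f, hf_span, hfi⟩ := AffineSubspace.exists_affineMap_eq_zero_of_notMem <|
    (hgen (univ.erase j) (by simp)).notMem_affineSpan_image (t := S) (by simp [hij])
      (fun l hl => mem_erase.mpr ⟨ne_of_mem_of_not_mem hl hjS, mem_univ l⟩) hiS
  have hfS : ∀ l ∈ S, f (p l) = 0 := fun l hl =>
    hf_span _ (mem_affineSpan ℝ (Set.mem_image_of_mem p hl))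
  have hij_sum : w i * f (p i) + w j * f (p j) = 0 := by
    rw [← f.sum_smul_apply_eq_zero hsum hvsub, Fintype.sum_eq_add i j hij]
    · rfl
    · intro l hl
      rw [hfS l (by simpa [S, not_or] using hl), smul_zero]
  rcases mul_neg_iff.mp (mul_neg_of_mul_add_mul_eq_zero hpos hfi hij_sum) with ⟨hi, hj⟩ | ⟨hi, hj⟩
  · exact ⟨S, j, i, hScard, hjS, hiS, hij.symm, f, hfS, hj, hi⟩
  · exact ⟨S, i, j, hScard, hiS, hjS, hij, f, hfS, hi, hj⟩
end

section
/- Existence part of quantitative Radon's theorem: For any d ≥ 1 and d+2 points in ℝ^d in general position (every d+1 of them affinely independent), there exists a partition of the index set Fin (d+2) into disjoint sets I and J such that the convex hulls of the corresponding point sets intersect in exactly one point. -/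
/-!
Any `d + 2` points in a `d`-dimensional space carry a nonzero affine dependence `w`
(`∑ wᵢ = 0`, `∑ wᵢ • pᵢ = 0`). General position forces every affine dependence vanishing at one
index to vanish everywhere. Hence no `wᵢ` is zero, so the signs of `w` partition the indices, and
the affine dependences form the line spanned by `w`. The normalised positive part of `w` and the
normalised negative part describe the same point, which lies in both convex hulls. For any common
point, the difference of its two vectors of convex weights is an affine dependence, hence a
multiple of `w`, which pins the point down.
-/

open Finset Module

theorem Submodule.eq_span_singleton_of_disjoint_ker {k M : Type*} [Field k] [AddCommGroup M]
    [Module k M] {V : Submodule k M} {f : M →ₗ[k] k} (hf : Disjoint V (LinearMap.ker f))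
    {w : M} (hw : w ∈ V) (hfw : f w ≠ 0) : V = k ∙ w := by
  refine le_antisymm (fun g hg => ?_) ((span_singleton_le_iff_mem w V).mpr hw)
  have hc : g - (f g / f w) • w = 0 :=
    disjoint_def.mp hf _ (V.sub_mem hg (V.smul_mem _ hw)) (by simp [hfw])
  exact mem_span_singleton.mpr ⟨f g / f w, (sub_eq_zero.mp hc).symm⟩

theorem Finset.sum_filter_pos_add_sum_filter_neg {ι k M : Type*} [Fintype ι] [LinearOrder k]
    [Zero k] [AddCommMonoid M] (w : ι → k) (f : ι → M) (hf : ∀ i, w i = 0 → f i = 0) :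
    ∑ i with 0 < w i, f i + ∑ i with w i < 0, f i = ∑ i, f i := by
  rw [← sum_filter_add_sum_filter_not univ (0 < w ·)]
  congr 1
  refine sum_subset (fun i hi => ?_) fun i hi hi' => hf i ?_
  · simp only [mem_filter, mem_univ, true_and, not_lt] at hi ⊢
    exact hi.le
  · simp only [mem_filter, mem_univ, true_and, not_lt] at hi hi'
    exact le_antisymm hi hi'

section AffineDependences

variable {ι k E : Type*} [Fintype ι] [AddCommGroup E]

variable (k) in
def affineDependences [CommRing k] [Module k E] (p : ι → E) : Submodule k (ι → k) :=
  LinearMap.ker ((Fintype.linearCombination k fun _ => (1 : k)).prod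
    (Fintype.linearCombination k p))

theorem mem_affineDependences [CommRing k] [Module k E] {p : ι → E} {c : ι → k} :
    c ∈ affineDependences k p ↔ ∑ i, c i = 0 ∧ ∑ i, c i • p i = 0 := by
  simp [affineDependences, Fintype.linearCombination_apply]

theorem exists_ne_zero_mem_affineDependences [Field k] [Module k E] [FiniteDimensional k E]
    (p : ι → E) (h : finrank k E + 1 < Fintype.card ι) :
    ∃ w ∈ affineDependences k p, w ≠ 0 :=
  Submodule.exists_mem_ne_zero_of_ne_bot <| LinearMap.ker_ne_bot_of_finrank_lt <| by
    simpa [add_comm] using h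

theorem disjoint_affineDependences_ker_proj [CommRing k] [Module k E] [DecidableEq ι]
    {p : ι → E} {e : ι} (he : AffineIndependent k fun i : (univ.erase e : Finset ι) => p i) :
    Disjoint (affineDependences k p) (LinearMap.ker (LinearMap.proj e : (ι → k) →ₗ[k] k)) := by
  refine Submodule.disjoint_def.mpr fun c hc hce => funext fun i => ?_
  obtain ⟨hc₀, hc₁⟩ := mem_affineDependences.mp hc
  rw [LinearMap.mem_ker, LinearMap.proj_apply] at hce
  rcases eq_or_ne i e with rfl | hi
  · exact hce
  have h₀ : ∑ j : (univ.erase e : Finset ι), c j = 0 := by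
    rwa [sum_coe_sort (univ.erase e) c, sum_erase _ hce]
  have h₁ : ∑ j : (univ.erase e : Finset ι), c j • p j = 0 := by
    rwa [sum_coe_sort (univ.erase e) (fun j => c j • p j), sum_erase _ (by rw [hce, zero_smul])]
  exact he.eq_zero_of_sum_eq_zero h₀ h₁ ⟨i, by simpa⟩ (mem_univ _)

end AffineDependences

section Convex

variable {ι k E : Type*} [Fintype ι] [Field k] [LinearOrder k] [IsStrictOrderedRing k]
  [AddCommGroup E] [Module k E] {p : ι → E}

theorem exists_weights_of_mem_convexHull_image {I : Set ι} {y : E}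
    (hy : y ∈ convexHull k (p '' I)) :
    ∃ a : ι → k, (∀ i, 0 ≤ a i) ∧ (∀ i ∉ I, a i = 0) ∧ ∑ i, a i = 1 ∧ ∑ i, a i • p i = y := by
  classical
  obtain ⟨κ, _, v, z, hv₀, hv₁, hz, rfl⟩ := mem_convexHull_iff_exists_fintype.mp hy
  choose σ hσI hσp using hz
  refine ⟨fun i => ∑ j with σ j = i, v j, fun i => sum_nonneg fun j _ => hv₀ j,
    fun i hi => sum_eq_zero fun j hj => absurd ((mem_filter.mp hj).2 ▸ hσI j) hi,
    by rw [sum_fiberwise univ σ v, hv₁], ?_⟩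
  calc ∑ i, (∑ j with σ j = i, v j) • p i
      = ∑ i, ∑ j with σ j = i, v j • z j := by
        refine sum_congr rfl fun i _ => ?_
        rw [sum_smul]
        exact sum_congr rfl fun j hj => by rw [← hσp j, (mem_filter.mp hj).2]
    _ = ∑ j, v j • z j := sum_fiberwise _ _ _

theorem centerMass_mem_convexHull_inter {w : ι → k} (hdep : w ∈ affineDependences k p)
    (hw : w ≠ 0) :
    (univ.filter (0 < w ·)).centerMass w p ∈
      convexHull k (p '' {i | 0 < w i}) ∩ convexHull k (p '' {i | w i < 0}) := by
  obtain ⟨hw₀, hw₁⟩ := mem_affineDependences.mp hdep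
  obtain ⟨e, -, hpos⟩ := exists_pos_of_sum_zero_of_exists_nonzero w hw₀
    (by simpa [funext_iff] using hw)
  have hI : 0 < ∑ i with 0 < w i, w i :=
    sum_pos' (fun i hi => (mem_filter.mp hi).2.le) ⟨e, by simpa using hpos, hpos⟩
  have hsum : ∑ i with 0 < w i, w i + ∑ i with w i < 0, w i = 0 := by
    rw [sum_filter_pos_add_sum_filter_neg w w fun i h => h, hw₀]
  have hvec : ∑ i with 0 < w i, w i • p i + ∑ i with w i < 0, w i • p i = 0 := by
    rw [sum_filter_pos_add_sum_filter_neg w _ fun i h => by rw [h, zero_smul], hw₁]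
  refine ⟨centerMass_mem_convexHull _ (fun i hi => (mem_filter.mp hi).2.le) hI
    fun i hi => Set.mem_image_of_mem p (mem_filter.mp hi).2, ?_⟩
  rw [centerMass_of_sum_add_sum_eq_zero hsum hvec]
  exact centerMass_mem_convexHull_of_nonpos _ (fun i hi => (mem_filter.mp hi).2.le)
    (by linarith) fun i hi => Set.mem_image_of_mem p (mem_filter.mp hi).2

theorem eq_centerMass_of_mem_convexHull_inter {w : ι → k}
    (hdep : affineDependences k p = k ∙ w) {y : E}
    (hy : y ∈ convexHull k (p '' {i | 0 < w i}) ∩ convexHull k (p '' {i | w i < 0})) :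
    y = (univ.filter (0 < w ·)).centerMass w p := by
  obtain ⟨a, -, haI, ha₁, hay⟩ := exists_weights_of_mem_convexHull_image hy.1
  obtain ⟨b, -, hbJ, hb₁, hby⟩ := exists_weights_of_mem_convexHull_image hy.2
  obtain ⟨t, ht⟩ : ∃ t : k, t • w = a - b := by
    rw [← Submodule.mem_span_singleton, ← hdep, mem_affineDependences]
    simp [sub_smul, sum_sub_distrib, ha₁, hb₁, hay, hby]
  have ha : ∀ i, a i = if 0 < w i then t * w i else 0 := by
    intro i
    split_ifs with hi
    · rw [← smul_eq_mul, ← Pi.smul_apply, ht, Pi.sub_apply, hbJ i hi.not_gt, sub_zero]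
    · exact haI i hi
  have ht : t = (∑ i with 0 < w i, w i)⁻¹ := by
    refine eq_inv_of_mul_eq_one_left ?_
    rw [mul_sum, sum_filter, ← ha₁]
    exact sum_congr rfl fun i _ => (ha i).symm
  rw [centerMass, ← ht, smul_sum, sum_filter, ← hay]
  refine sum_congr rfl fun i _ => ?_
  rw [ha i]
  split_ifs <;> simp [mul_smul]

theorem convexHull_inter_convexHull_eq_singleton {w : ι → k}
    (hdep : affineDependences k p = k ∙ w) (hw : w ≠ 0) :
    convexHull k (p '' {i | 0 < w i}) ∩ convexHull k (p '' {i | w i < 0}) =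
      {(univ.filter (0 < w ·)).centerMass w p} :=
  Set.eq_singleton_iff_unique_mem.mpr
    ⟨centerMass_mem_convexHull_inter (hdep ▸ Submodule.mem_span_singleton_self w) hw,
      fun _ hy => eq_centerMass_of_mem_convexHull_inter hdep hy⟩

end Convex

theorem quantitative_radon_existence_general (d : ℕ)
    (p : Fin (d + 2) → (Fin d → ℝ))
    (hgen : ∀ s : Finset (Fin (d + 2)), s.card = d + 1 →
      AffineIndependent ℝ (fun i : s => p i)) :
    ∃ I J : Set (Fin (d + 2)), I ∩ J = ∅ ∧ I ∪ J = Set.univ ∧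
      ∃ x : Fin d → ℝ, convexHull ℝ (p '' I) ∩ convexHull ℝ (p '' J) = {x} := by
  obtain ⟨w, hdep, hw⟩ := exists_ne_zero_mem_affineDependences (k := ℝ) p (by simp)
  have hdisj (e : Fin (d + 2)) :=
    disjoint_affineDependences_ker_proj (hgen (univ.erase e) (by simp))
  have hne (i : Fin (d + 2)) : w i ≠ 0 :=
    fun h => hw (Submodule.disjoint_def.mp (hdisj i) w hdep h)
  refine ⟨{i | 0 < w i}, {i | w i < 0}, ?_, ?_, _,
    convexHull_inter_convexHull_eq_singleton
      (Submodule.eq_span_singleton_of_disjoint_ker (hdisj 0) hdep (hne 0)) hw⟩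
  · ext i
    simpa using le_of_lt
  · ext i
    simpa using (hne i).symm.lt_or_gt

theorem quantitative_radon_existence (d : ℕ) (hd : 1 ≤ d)
    (p : Fin (d + 2) → (Fin d → ℝ))
    (hgen : ∀ s : Finset (Fin (d + 2)), s.card = d + 1 →
      AffineIndependent ℝ (fun i : s => p i)) :
    ∃ I J : Set (Fin (d + 2)), I ∩ J = ∅ ∧ I ∪ J = Set.univ ∧
      ∃ x : Fin d → ℝ, convexHull ℝ (p '' I) ∩ convexHull ℝ (p '' J) = {x} :=
  quantitative_radon_existence_general d p hgen
end

section
/- For points in general position, any Radon intersection is a single point: if d+2 points in ℝ^d have every d+1 of them affinely independent, and I ⊔ J is a partition of the index set with the convex hulls of the corresponding point sets intersecting, then that intersection is a singleton. -/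
open Finset Module

theorem radon_intersection_singleton (d : ℕ) (hd : 1 ≤ d)
    (p : Fin (d + 2) → (Fin d → ℝ))
    (hgen : ∀ s : Finset (Fin (d + 2)), s.card = d + 1 →
      AffineIndependent ℝ (fun i : s => p i))
    (I J : Set (Fin (d + 2))) (hdisj : I ∩ J = ∅) (hunion : I ∪ J = Set.univ)
    (hmeet : (convexHull ℝ (p '' I) ∩ convexHull ℝ (p '' J)).Nonempty) :
    ∃ x : Fin d → ℝ, convexHull ℝ (p '' I) ∩ convexHull ℝ (p '' J) = {x} := by
  classical
  obtain ⟨x, hxI, hxJ⟩ := hmeet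
  -- general position for any subset of card ≤ d+1
  have hai : ∀ A : Set (Fin (d + 2)), A.toFinset.card ≤ d + 1 →
      AffineIndependent ℝ (fun i : A => p i) := by
    intro A hA
    obtain ⟨s, hsub, hcard⟩ := Finset.exists_superset_card_eq hA (by simp)
    have h := (hgen s hcard).comp_embedding
      ⟨fun i : A => (⟨i, hsub (by simpa using i.2)⟩ : s),
        fun a b hab => Subtype.ext (by simpa using congrArg Subtype.val hab)⟩
    exact h
  -- I and J are nonempty
  have hIne : I.Nonempty := by
    by_contra h
    rw [Set.not_nonempty_iff_eq_empty] at h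
    simp [h] at hxI
  have hJne : J.Nonempty := by
    by_contra h
    rw [Set.not_nonempty_iff_eq_empty] at h
    simp [h] at hxJ
  have hcardIJ : I.toFinset.card + J.toFinset.card = d + 2 := by
    have : I.toFinset ∪ J.toFinset = Finset.univ := by
      ext i; simp [← Set.mem_union, hunion]
    have hdis : Disjoint I.toFinset J.toFinset := by
      rw [Finset.disjoint_left]
      intro a ha hb
      have : a ∈ I ∩ J := ⟨by simpa using ha, by simpa using hb⟩
      simp [hdisj] at this
    calc I.toFinset.card + J.toFinset.card = (I.toFinset ∪ J.toFinset).card :=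
          (Finset.card_union_of_disjoint hdis).symm
      _ = d + 2 := by rw [this]; simp
  have hIc : 1 ≤ I.toFinset.card := Finset.card_pos.2 (by simpa using hIne)
  have hJc : 1 ≤ J.toFinset.card := Finset.card_pos.2 (by simpa using hJne)
  have haiI := hai I (by omega)
  have haiJ := hai J (by omega)
  have hrI : finrank ℝ (vectorSpan ℝ (p '' I)) = I.toFinset.card - 1 := by
    have := haiI.finrank_vectorSpan (n := I.toFinset.card - 1) ?_
    · rwa [← Set.image_eq_range] at this
    · rw [← Set.toFinset_card]; omega
  have hrJ : finrank ℝ (vectorSpan ℝ (p '' J)) = J.toFinset.card - 1 := by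
    have := haiJ.finrank_vectorSpan (n := J.toFinset.card - 1) ?_
    · rwa [← Set.image_eq_range] at this
    · rw [← Set.toFinset_card]; omega
  have hxI' : x ∈ affineSpan ℝ (p '' I) := convexHull_subset_affineSpan _ hxI
  have hxJ' : x ∈ affineSpan ℝ (p '' J) := convexHull_subset_affineSpan _ hxJ
  have hsup : vectorSpan ℝ (Set.range p) ≤ vectorSpan ℝ (p '' I) ⊔ vectorSpan ℝ (p '' J) := by
    rw [vectorSpan_def, Submodule.span_le]
    rintro v ⟨a, ⟨i, rfl⟩, b, ⟨j, rfl⟩, rfl⟩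
    have hmem : ∀ k : Fin (d + 2), p k -ᵥ x ∈ vectorSpan ℝ (p '' I) ⊔ vectorSpan ℝ (p '' J) := by
      intro k
      have : k ∈ I ∪ J := by rw [hunion]; trivial
      rcases this with hk | hk
      · exact Submodule.mem_sup_left (by
          rw [← direction_affineSpan]
          exact AffineSubspace.vsub_mem_direction (subset_affineSpan ℝ _ ⟨k, hk, rfl⟩) hxI')
      · exact Submodule.mem_sup_right (by
          rw [← direction_affineSpan]
          exact AffineSubspace.vsub_mem_direction (subset_affineSpan ℝ _ ⟨k, hk, rfl⟩) hxJ')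
    simpa [vsub_eq_sub, sub_sub_sub_cancel_right] using Submodule.sub_mem _ (hmem i) (hmem j)
  have hbig : d ≤ finrank ℝ (vectorSpan ℝ (Set.range p)) := by
    obtain ⟨s, -, hcard⟩ := Finset.exists_subset_card_eq (s := (Finset.univ : Finset (Fin (d+2)))) (n := d+1) (by simp)
    have h1 := (hgen s hcard).finrank_vectorSpan (n := d) (by simp [hcard])
    have h2 : vectorSpan ℝ (Set.range fun i : s => p i) ≤ vectorSpan ℝ (Set.range p) :=
      vectorSpan_mono ℝ (by rintro v ⟨i, rfl⟩; exact ⟨i, rfl⟩)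
    calc d = finrank ℝ (vectorSpan ℝ (Set.range fun i : s => p i)) := h1.symm
      _ ≤ finrank ℝ (vectorSpan ℝ (Set.range p)) := Submodule.finrank_mono h2
  -- now show the intersection of vector spans is trivial
  have hinf : vectorSpan ℝ (p '' I) ⊓ vectorSpan ℝ (p '' J) = ⊥ := by
    by_contra hne
    have hpos : 1 ≤ finrank ℝ ↥(vectorSpan ℝ (p '' I) ⊓ vectorSpan ℝ (p '' J)) :=
      Submodule.one_le_finrank_iff.mpr hne
    have hdim := Submodule.finrank_sup_add_finrank_inf_eq
      (vectorSpan ℝ (p '' I)) (vectorSpan ℝ (p '' J))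
    have hle : finrank ℝ ↥(vectorSpan ℝ (p '' I) ⊔ vectorSpan ℝ (p '' J)) ≥ d :=
      le_trans hbig (Submodule.finrank_mono hsup)
    omega
  -- conclude
  refine ⟨x, Set.eq_singleton_iff_unique_mem.2 ⟨⟨hxI, hxJ⟩, ?_⟩⟩
  rintro y ⟨hyI, hyJ⟩
  have hyI' : y ∈ affineSpan ℝ (p '' I) := convexHull_subset_affineSpan _ hyI
  have hyJ' : y ∈ affineSpan ℝ (p '' J) := convexHull_subset_affineSpan _ hyJ
  have hv : y -ᵥ x ∈ vectorSpan ℝ (p '' I) ⊓ vectorSpan ℝ (p '' J) := by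
    constructor
    · rw [← direction_affineSpan]; exact AffineSubspace.vsub_mem_direction hyI' hxI'
    · rw [← direction_affineSpan]; exact AffineSubspace.vsub_mem_direction hyJ' hxJ'
  rw [hinf] at hv
  exact (vsub_eq_zero_iff_eq.mp ((Submodule.mem_bot ℝ).1 hv))
end

section
/- Central projection preserves Radon partitions: Let A₁,…,A_{d+1}, A_{d+2} be points in ℝ^d and α a hyperplane strictly separating A_{d+2} from A₁,…,A_{d+1}. For each i ≤ d+1, let A′_i be the intersection of segment A_{d+2}A_i with α. If I ⊔ J is a partition of {1,…,d+1} such that the convex hulls of {A_i : i ∈ I} and {A_j : j ∈ J} intersect at a point X, then the convex hulls of {A′_i : i ∈ I} and {A′_j : j ∈ J} intersect at the point where segment A_{d+2}X meets α. -/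
open Finset

-- f applied to a convex combination
lemma f_sum_aux {E : Type*} [AddCommGroup E] [Module ℝ E] (f : E →ᵃ[ℝ] ℝ) {ι : Type*}
    (t : Finset ι) (w : ι → ℝ) (z : ι → E) (hw : ∑ i ∈ t, w i = 1) :
    f (∑ i ∈ t, w i • z i) = ∑ i ∈ t, w i * f (z i) := by
  have hd : ∀ x, f x = f.linear x + f 0 := fun x => by
    conv_lhs => rw [f.decomp]
    rfl
  rw [hd, map_sum]
  simp only [map_smul, smul_eq_mul]
  have : ∀ i ∈ t, w i * f (z i) = w i * f.linear (z i) + w i * f 0 := by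
    intro i _; rw [hd]; ring
  rw [Finset.sum_congr rfl this, Finset.sum_add_distrib, ← Finset.sum_mul, hw, one_mul]

-- the unique intersection of segment P Q with {f = 0}
lemma seg_point {E : Type*} [AddCommGroup E] [Module ℝ E] (f : E →ᵃ[ℝ] ℝ) {P Q z : E}
    (hP : f P < 0) (hQ : 0 < f Q) (hz : z ∈ segment ℝ P Q) (hz0 : f z = 0) :
    z = (f Q / (f Q - f P)) • P + (-f P / (f Q - f P)) • Q := by
  obtain ⟨a, b, ha, hb, hab, rfl⟩ := hz
  have hfz : a * f P + b * f Q = 0 := by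
    have := Convex.combo_affine_apply (f := f) (x := P) (y := Q) hab
    simpa [smul_eq_mul] using this.symm.trans hz0
  have hD : 0 < f Q - f P := by linarith
  have ha' : a = f Q / (f Q - f P) := by
    field_simp
    nlinarith [hfz, hab]
  have hb' : b = -f P / (f Q - f P) := by
    field_simp
    nlinarith [hfz, hab]
  rw [ha', hb']

lemma hull_step {E : Type*} [AddCommGroup E] [Module ℝ E] (f : E →ᵃ[ℝ] ℝ) (P : E)
    (hP : f P < 0) (S : Set E) (hS : ∀ x ∈ S, 0 < f x) (X : E) (hX : X ∈ convexHull ℝ S) :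
    (f X / (f X - f P)) • P + (-f P / (f X - f P)) • X ∈
      convexHull ℝ ((fun x => (f x / (f x - f P)) • P + (-f P / (f x - f P)) • x) '' S) := by
  set proj : E → E := fun x => (f x / (f x - f P)) • P + (-f P / (f x - f P)) • x with hproj
  have hX0 := hX
  rw [_root_.convexHull_eq] at hX
  obtain ⟨ι, t, w, z, hw0, hw1, hzS, hXeq⟩ := hX
  have hzpos : ∀ i ∈ t, 0 < f (z i) := fun i hi => hS _ (hzS i hi)
  have hXsum : X = ∑ i ∈ t, w i • z i := by
    rw [← hXeq, Finset.centerMass_eq_of_sum_1 _ _ hw1]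
  have hfX : f X = ∑ i ∈ t, w i * f (z i) := by rw [hXsum, f_sum_aux f t w z hw1]
  set c : ι → ℝ := fun i => w i * (f (z i) - f P) with hc
  have hc0 : ∀ i ∈ t, 0 ≤ c i := fun i hi =>
    mul_nonneg (hw0 i hi) (by have := hzpos i hi; linarith)
  have hcsum : ∑ i ∈ t, c i = f X - f P := by
    simp only [hc, mul_sub]
    rw [Finset.sum_sub_distrib, ← hfX, ← Finset.sum_mul, hw1, one_mul]
  have hfXpos : 0 < f X := by
    have hsub : convexHull ℝ S ⊆ f ⁻¹' Set.Ioi 0 :=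
      convexHull_min (fun x hx => hS x hx) ((convex_Ioi (0:ℝ)).affine_preimage f)
    exact hsub hX0
  have hcsumpos : 0 < ∑ i ∈ t, c i := by rw [hcsum]; linarith
  have hmem : ∀ i ∈ t, proj (z i) ∈ proj '' S := fun i hi => Set.mem_image_of_mem _ (hzS i hi)
  have hkey := Finset.centerMass_mem_convexHull t hc0 hcsumpos hmem
  have hcm : t.centerMass c (fun i => proj (z i)) =
      (f X / (f X - f P)) • P + (-f P / (f X - f P)) • X := by
    rw [Finset.centerMass, hcsum]
    have hterm : ∀ i ∈ t, c i • proj (z i) = (w i * f (z i)) • P + (w i * (-f P)) • z i := by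
      intro i hi
      have hD : f (z i) - f P ≠ 0 := by have := hzpos i hi; intro h; linarith
      simp only [hproj, smul_add, smul_smul, hc]
      congr 1
      · congr 1; field_simp
      · congr 1; field_simp
    rw [Finset.sum_congr rfl hterm, Finset.sum_add_distrib]
    have h1 : ∑ i ∈ t, (w i * f (z i)) • P = f X • P := by
      rw [← Finset.sum_smul, ← hfX]
    have h2 : ∑ i ∈ t, (w i * (-f P)) • z i = (-f P) • X := by
      rw [hXsum, Finset.smul_sum]
      exact Finset.sum_congr rfl fun i hi => by rw [smul_smul, mul_comm]
    rw [h1, h2, smul_add, smul_smul, smul_smul]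
    congr 1 <;> · congr 1; field_simp
  rw [← hcm]
  exact hkey

theorem central_projection_preserves_radon (d : ℕ)
    (A : Fin (d + 1) → (Fin d → ℝ)) (P : Fin d → ℝ)
    (f : (Fin d → ℝ) →ᵃ[ℝ] ℝ)
    (hP : f P < 0) (hA : ∀ i, 0 < f (A i))
    (A' : Fin (d + 1) → (Fin d → ℝ))
    (hA' : ∀ i, A' i ∈ segment ℝ P (A i) ∧ f (A' i) = 0)
    (I J : Set (Fin (d + 1))) (hdisj : I ∩ J = ∅) (hunion : I ∪ J = Set.univ)
    (X : Fin d → ℝ)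
    (hX : X ∈ convexHull ℝ (A '' I) ∩ convexHull ℝ (A '' J))
    (X' : Fin d → ℝ) (hX'seg : X' ∈ segment ℝ P X) (hX'α : f X' = 0) :
    X' ∈ convexHull ℝ (A' '' I) ∩ convexHull ℝ (A' '' J) := by
  set proj : (Fin d → ℝ) → (Fin d → ℝ) :=
    fun x => (f x / (f x - f P)) • P + (-f P / (f x - f P)) • x with hproj
  have hA'proj : ∀ i, A' i = proj (A i) := fun i =>
    seg_point f hP (hA i) (hA' i).1 (hA' i).2
  have main : ∀ S : Set (Fin (d + 1)), X ∈ convexHull ℝ (A '' S) →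
      X' ∈ convexHull ℝ (A' '' S) := by
    intro S hXS
    have hpos : ∀ x ∈ A '' S, 0 < f x := by rintro x ⟨i, -, rfl⟩; exact hA i
    have hfX : 0 < f X := by
      have hsub : convexHull ℝ (A '' S) ⊆ f ⁻¹' Set.Ioi 0 :=
        convexHull_min hpos ((convex_Ioi (0:ℝ)).affine_preimage f)
      exact hsub hXS
    have hX'eq : X' = proj X := seg_point f hP hfX hX'seg hX'α
    have him : A' '' S = proj '' (A '' S) := by
      rw [Set.image_image]
      exact Set.image_congr fun i _ => hA'proj i
    rw [hX'eq, him]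
    exact hull_step f P hP (A '' S) hpos X hXS
  exact ⟨main I hX.1, main J hX.2⟩
end

section
/- Lifting step: Let A₁,…,A_{d+1} lie strictly on one side of a hyperplane α in ℝ^d and A_{d+2} strictly on the other side, with A′_i the intersection of segment A_{d+2}A_i with α. If I′ ⊔ J′ is a partition of {1,…,d+1} such that the convex hulls of {A′_i : i ∈ I′} and {A′_j : j ∈ J′} intersect at a point Y′, then the ray from A_{d+2} through Y′ meets both the convex hull of {A_i : i ∈ I′} and the convex hull of {A_j : j ∈ J′}. -/
/-!
Put the apex at `P`. Each `A' i - P` is a positive multiple of `A i - P`, so `Y' - P`, a convex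
combination of the `A' i - P`, lies in the convex cone generated by the convex hull of the
corresponding `A i - P`. As that hull is convex, its cone is the union of the open rays through
it; hence some positive multiple of `Y' - P` lands in the hull.
-/

section

open scoped Pointwise

variable {𝕜 E ι : Type*} [AddCommGroup E]

section Ring

variable [Ring 𝕜] [PartialOrder 𝕜] [Module 𝕜 E]

theorem sub_mem_convexHull_image_sub_iff (P x : E) (A : ι → E) (S : Set ι) :
    x - P ∈ convexHull 𝕜 ((fun i => A i - P) '' S) ↔ x ∈ convexHull 𝕜 (A '' S) := by
  have hshift : (fun i => A i - P) '' S = -P +ᵥ A '' S := by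
    rw [← Set.image_vadd, Set.image_image]
    simp only [vadd_eq_add, neg_add_eq_sub]
  rw [hshift, convexHull_vadd, Set.mem_vadd_set_iff_neg_vadd_mem, neg_neg, vadd_eq_add,
    add_sub_cancel]

theorem exists_pos_sub_eq_smul_of_mem_segment [IsOrderedRing 𝕜] {P A X : E}
    (hX : X ∈ segment 𝕜 P A) (hXP : X ≠ P) : ∃ s : 𝕜, 0 < s ∧ X - P = s • (A - P) := by
  rw [segment_eq_image'] at hX
  obtain ⟨s, ⟨hs0, -⟩, rfl⟩ := hX
  refine ⟨s, hs0.lt_of_ne ?_, add_sub_cancel_left _ _⟩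
  rintro rfl
  simp at hXP

end Ring

variable [Field 𝕜] [LinearOrder 𝕜] [IsStrictOrderedRing 𝕜] [Module 𝕜 E]

theorem exists_pos_smul_mem_convexHull_of_mem_convexHull_smul {v : ι → E} {s : ι → 𝕜}
    (hs : ∀ i, 0 < s i) {S : Set ι} {y : E}
    (hy : y ∈ convexHull 𝕜 ((fun i => s i • v i) '' S)) :
    ∃ t : 𝕜, 0 < t ∧ t • y ∈ convexHull 𝕜 (v '' S) := by
  set K := convexHull 𝕜 (v '' S)
  have hsub : (fun i => s i • v i) '' S ⊆ ConvexCone.hull 𝕜 K := by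
    rintro _ ⟨i, hi, rfl⟩
    exact (ConvexCone.hull 𝕜 K).smul_mem (hs i)
      (ConvexCone.subset_hull (subset_convexHull 𝕜 _ ⟨i, hi, rfl⟩))
  obtain ⟨r, hr, k, hk, rfl⟩ := (ConvexCone.mem_hull_of_convex (convex_convexHull 𝕜 _)).1
    (convexHull_min hsub (ConvexCone.convex _) hy)
  exact ⟨r⁻¹, inv_pos.2 hr, by rwa [smul_smul, inv_mul_cancel₀ hr.ne', one_smul]⟩

theorem exists_pos_ray_mem_convexHull {P : E} {A A' : ι → E} {s : ι → 𝕜}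
    (hs : ∀ i, 0 < s i) (hA' : ∀ i, A' i - P = s i • (A i - P)) {S : Set ι} {Y' : E}
    (hY' : Y' ∈ convexHull 𝕜 (A' '' S)) :
    ∃ t : 𝕜, 0 < t ∧ P + t • (Y' - P) ∈ convexHull 𝕜 (A '' S) := by
  rw [← sub_mem_convexHull_image_sub_iff P, funext hA'] at hY'
  obtain ⟨t, ht, hmem⟩ := exists_pos_smul_mem_convexHull_of_mem_convexHull_smul hs hY'
  refine ⟨t, ht, ?_⟩
  rwa [← sub_mem_convexHull_image_sub_iff P, add_sub_cancel_left]

end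

theorem lifting_step_general (d : ℕ)
    (A : Fin (d + 1) → (Fin d → ℝ)) (P : Fin d → ℝ)
    (f : (Fin d → ℝ) →ᵃ[ℝ] ℝ)
    (hP : f P < 0)
    (A' : Fin (d + 1) → (Fin d → ℝ))
    (hA' : ∀ i, A' i ∈ segment ℝ P (A i) ∧ f (A' i) = 0)
    (I' J' : Set (Fin (d + 1)))
    (Y' : Fin d → ℝ)
    (hY' : Y' ∈ convexHull ℝ (A' '' I') ∩ convexHull ℝ (A' '' J')) :
    (∃ t : ℝ, 0 ≤ t ∧ P + t • (Y' - P) ∈ convexHull ℝ (A '' I')) ∧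
    (∃ t : ℝ, 0 ≤ t ∧ P + t • (Y' - P) ∈ convexHull ℝ (A '' J')) := by
  have hA'P : ∀ i, A' i ≠ P := fun i h => by
    have hf := (hA' i).2
    rw [h] at hf
    linarith
  choose s hs hA's using fun i => exists_pos_sub_eq_smul_of_mem_segment (hA' i).1 (hA'P i)
  have hray : ∀ S, Y' ∈ convexHull ℝ (A' '' S) →
      ∃ t : ℝ, 0 ≤ t ∧ P + t • (Y' - P) ∈ convexHull ℝ (A '' S) := fun S hS =>
    let ⟨t, ht, hmem⟩ := exists_pos_ray_mem_convexHull hs hA's hS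
    ⟨t, ht.le, hmem⟩
  exact ⟨hray I' hY'.1, hray J' hY'.2⟩

theorem lifting_step (d : ℕ)
    (A : Fin (d + 1) → (Fin d → ℝ)) (P : Fin d → ℝ)
    (f : (Fin d → ℝ) →ᵃ[ℝ] ℝ)
    (hP : f P < 0) (hA : ∀ i, 0 < f (A i))
    (A' : Fin (d + 1) → (Fin d → ℝ))
    (hA' : ∀ i, A' i ∈ segment ℝ P (A i) ∧ f (A' i) = 0)
    (I' J' : Set (Fin (d + 1))) (hdisj : I' ∩ J' = ∅) (hunion : I' ∪ J' = Set.univ)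
    (Y' : Fin d → ℝ)
    (hY' : Y' ∈ convexHull ℝ (A' '' I') ∩ convexHull ℝ (A' '' J')) :
    (∃ t : ℝ, 0 ≤ t ∧ P + t • (Y' - P) ∈ convexHull ℝ (A '' I')) ∧
    (∃ t : ℝ, 0 ≤ t ∧ P + t • (Y' - P) ∈ convexHull ℝ (A '' J')) :=
  lifting_step_general d A P f hP A' hA' I' J' Y' hY'
end

section
/- If a point Y′ lies in the convex hull of points A′₁,…,A′ₖ, where each A′_i lies on segment from P to A_i, then the segment PY′ is contained in the convex hull of {P, A₁, …, Aₖ}, and the ray from P through Y′ meets the convex hull of {A₁,…,Aₖ} provided the A_i all lie strictly on the far side of a hyperplane through the A′_i separating them from P. -/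
/-!
Every `A' i` lies on the segment from `P` to `A i`, so the convex hull of the `A' i`, and with it
`Y'`, lies in the convex hull of `P` and the `A i`; convexity then gives the segment `P Y'`.
That hull is the union of the segments from `P` to points `z` of the convex hull of the `A i`, so
`Y'` lies on such a segment, and if `Y' ≠ P` then `z` is on the ray from `P` through `Y'`.
The affine function `f` vanishes at `Y'` but not at `P`, which rules out `Y' = P`.
-/

open Set

theorem convexHull_range_subset_convexHull_insert_of_mem_segment {𝕜 E ι : Type*} [Semiring 𝕜]
    [PartialOrder 𝕜] [AddCommMonoid E] [Module 𝕜 E] {P : E}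
    {A A' : ι → E} (hseg : ∀ i, A' i ∈ segment 𝕜 P (A i)) :
    convexHull 𝕜 (range A') ⊆ convexHull 𝕜 (insert P (range A)) := by
  refine convexHull_min ?_ (convex_convexHull 𝕜 _)
  rintro _ ⟨i, rfl⟩
  exact (convex_convexHull 𝕜 _).segment_subset
    (subset_convexHull 𝕜 _ (mem_insert P _))
    (subset_convexHull 𝕜 _ (mem_insert_of_mem P (mem_range_self i))) (hseg i)

section

variable {𝕜 E : Type*} [Field 𝕜] [LinearOrder 𝕜] [IsStrictOrderedRing 𝕜]
  [AddCommGroup E] [Module 𝕜 E]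

theorem exists_nonneg_add_smul_sub_eq_of_mem_segment {P Y z : E} (hY : Y ∈ segment 𝕜 P z)
    (hYP : Y ≠ P) : ∃ t : 𝕜, 0 ≤ t ∧ P + t • (Y - P) = z := by
  obtain ⟨a, b, -, hb, hab, rfl⟩ := hY
  obtain rfl : a = 1 - b := eq_sub_of_add_eq hab
  have hb0 : b ≠ 0 := by
    rintro rfl
    simp at hYP
  have hsub : (1 - b) • P + b • z - P = b • (z - P) := by module
  refine ⟨b⁻¹, inv_nonneg.mpr hb, ?_⟩
  rw [hsub, smul_smul, inv_mul_cancel₀ hb0, one_smul, add_sub_cancel]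

theorem exists_nonneg_add_smul_sub_mem_convexHull_of_mem_convexHull_insert {P Y : E} {s : Set E}
    (hY : Y ∈ convexHull 𝕜 (insert P s)) (hYP : Y ≠ P) :
    ∃ t : 𝕜, 0 ≤ t ∧ P + t • (Y - P) ∈ convexHull 𝕜 s := by
  rcases s.eq_empty_or_nonempty with rfl | hs
  · simp [hYP] at hY
  rw [convexHull_insert hs, mem_convexJoin] at hY
  obtain ⟨_, rfl, z, hz, hYz⟩ := hY
  obtain ⟨t, ht, hzt⟩ := exists_nonneg_add_smul_sub_eq_of_mem_segment hYz hYP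
  exact ⟨t, ht, hzt ▸ hz⟩

end

theorem segment_and_ray_in_cone (d k : ℕ)
    (P : Fin d → ℝ) (A A' : Fin k → (Fin d → ℝ))
    (hseg : ∀ i, A' i ∈ segment ℝ P (A i))
    (Y' : Fin d → ℝ) (hY' : Y' ∈ convexHull ℝ (Set.range A')) :
    segment ℝ P Y' ⊆ convexHull ℝ ({P} ∪ Set.range A) ∧
    (∀ f : (Fin d → ℝ) →ᵃ[ℝ] ℝ, f P < 0 → (∀ i, f (A' i) = 0) → (∀ i, 0 < f (A i)) →
      ∃ t : ℝ, 0 ≤ t ∧ P + t • (Y' - P) ∈ convexHull ℝ (Set.range A)) := by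
  rw [singleton_union]
  have hY'_mem : Y' ∈ convexHull ℝ (insert P (range A)) :=
    convexHull_range_subset_convexHull_insert_of_mem_segment hseg hY'
  refine ⟨(convex_convexHull ℝ _).segment_subset
    (subset_convexHull ℝ _ (mem_insert P _)) hY'_mem, fun f hfP hfA' _ => ?_⟩
  have hfY' : f Y' = 0 :=
    convexHull_min (s := range A') (t := f ⁻¹' {0}) (by rintro _ ⟨i, rfl⟩; exact hfA' i)
      ((convex_singleton 0).affine_preimage f) hY'
  have hY'P : Y' ≠ P := fun h => hfP.ne (h ▸ hfY')
  exact exists_nonneg_add_smul_sub_mem_convexHull_of_mem_convexHull_insert hY'_mem hY'P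
end

section
/- For d+2 points in ℝ^d, after possibly renumbering, there is a hyperplane strictly separating one point from the other d+1 points, provided the points are in general position. -/
/-!
General position makes the points pairwise distinct. A linear functional then takes pairwise
distinct values on them, since the functionals identifying two given points form a proper subspace
of the dual and finitely many proper subspaces of a real vector space never cover it. The point
where this functional is largest is split off from the others by a level set of the functional.
-/

open Function

theorem AffineIndependent.injective_of_forall_card_eq {k V P ι : Type*} [Ring k] [Nontrivial k]
    [AddCommGroup V] [Module k V] [AddTorsor V P] [Fintype ι] {p : ι → P} {n : ℕ}
    (h2n : 2 ≤ n) (hn : n ≤ Fintype.card ι)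
    (hp : ∀ s : Finset ι, s.card = n → AffineIndependent k (fun i : s => p i)) :
    Injective p := by
  classical
  intro i j hij
  by_contra hne
  obtain ⟨s, hijs, -, hs⟩ := Finset.exists_subsuperset_card_eq (Finset.subset_univ {i, j})
    (by simpa [Finset.card_pair hne] using h2n) (by simpa using hn)
  have hi : i ∈ s := hijs (by simp)
  have hj : j ∈ s := hijs (by simp)
  exact hne <| congrArg Subtype.val <|
    (hp s hs).injective (a₁ := ⟨i, hi⟩) (a₂ := ⟨j, hj⟩) hij

theorem Module.Dual.exists_injective_comp {K V ι : Type*} [Field K] [Infinite K]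
    [AddCommGroup V] [Module K V] [Finite ι] {p : ι → V} (hp : Function.Injective p) :
    ∃ f : Module.Dual K V, Function.Injective (f ∘ p) := by
  -- otherwise the dual is covered by the finitely many kernels of evaluation at `p i - p j`
  by_contra! h
  let ker : {q : ι × ι // q.1 ≠ q.2} → Subspace K (Module.Dual K V) :=
    fun q => LinearMap.ker (Module.Dual.eval K V (p q.1.1 - p q.1.2))
  have hcover : ⋃ q, (ker q : Set (Module.Dual K V)) = Set.univ := by
    refine Set.eq_univ_of_forall fun f => Set.mem_iUnion.mpr ?_
    obtain ⟨i, j, hfij, hij⟩ := Function.not_injective_iff.mp (h f)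
    exact ⟨⟨(i, j), hij⟩, by simpa [ker, sub_eq_zero] using hfij⟩
  obtain ⟨q, hq⟩ := Subspace.exists_eq_top_of_iUnion_eq_univ hcover
  obtain ⟨f, hf⟩ := Module.Projective.exists_dual_ne_zero K
    (sub_ne_zero.mpr (hp.ne q.2))
  exact hf (show f ∈ ker q from hq ▸ Submodule.mem_top)

theorem Function.Injective.exists_forall_ne_lt_lt {ι α : Type*} [Finite ι] [Nonempty ι]
    [LinearOrder α] [DenselyOrdered α] [NoMinOrder α] [NoMaxOrder α] {g : ι → α}
    (hg : Injective g) :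
    ∃ i c, c < g i ∧ ∀ j ≠ i, g j < c := by
  obtain ⟨i, hi⟩ := Finite.exists_max g
  have : Nonempty α := ⟨g i⟩
  have hmax : ∀ x ∈ g '' {i}ᶜ, ∀ y ∈ ({g i} : Set α), x < y := by
    rintro _ ⟨j, hj, rfl⟩ _ rfl
    exact (hi j).lt_of_ne (hg.ne hj)
  obtain ⟨c, hlt, hgt⟩ :=
    (Set.toFinite (g '' {i}ᶜ)).exists_between' (Set.finite_singleton (g i)) hmax
  exact ⟨i, c, hgt _ rfl, fun j hj => hlt _ ⟨j, hj, rfl⟩⟩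

theorem exists_separating_hyperplane (d : ℕ) (hd : 1 ≤ d)
    (p : Fin (d + 2) → (Fin d → ℝ))
    (hgen : ∀ s : Finset (Fin (d + 2)), s.card = d + 1 →
      AffineIndependent ℝ (fun i : s => p i)) :
    ∃ (i : Fin (d + 2)) (f : (Fin d → ℝ) →ᵃ[ℝ] ℝ),
      f (p i) < 0 ∧ ∀ j, j ≠ i → 0 < f (p j) := by
  have hp : Injective p :=
    AffineIndependent.injective_of_forall_card_eq (n := d + 1) (by omega) (by simp) hgen
  obtain ⟨f, hf⟩ := Module.Dual.exists_injective_comp (K := ℝ) hp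
  obtain ⟨i, c, hci, hcj⟩ := hf.exists_forall_ne_lt_lt
  refine ⟨i, AffineMap.const ℝ _ c - f.toAffineMap, ?_, fun j hj => ?_⟩
  · simpa using hci
  · simpa using hcj j hj
end

section
/- Van Kampen–Flores for 7 points: Among any 7 points in ℝ⁴, there exist two disjoint triples of points such that the convex hulls of the two triples (the two triangles) have nonempty intersection. -/
open Finset

/-- Key combinatorial/topological lemma: in a 2-dimensional space of vectors in `ℝ⁷`,
there is a nonzero vector with at most 3 positive and at most 3 negative coordinates. -/
lemma exists_balanced (l : Fin 2 → (Fin 7 → ℝ)) (hl : LinearIndependent ℝ l) :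
    ∃ c : Fin 2 → ℝ, (c 0 • l 0 + c 1 • l 1 ≠ 0) ∧
      (univ.filter fun i => 0 < (c 0 • l 0 + c 1 • l 1) i).card ≤ 3 ∧
      (univ.filter fun i => (c 0 • l 0 + c 1 • l 1) i < 0).card ≤ 3 := by
  classical
  set lam : (Fin 2 → ℝ) → Fin 7 → ℝ := fun c => c 0 • l 0 + c 1 • l 1 with hlam
  have hlam_ne : ∀ c : Fin 2 → ℝ, c ≠ 0 → lam c ≠ 0 := by
    intro c hc h
    apply hc
    have := Fintype.linearIndependent_iff.mp hl c (by
      rw [Fin.sum_univ_two]; exact h)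
    funext i; exact this i
  have hlam_neg : ∀ c : Fin 2 → ℝ, lam (-c) = -lam c := by
    intro c
    simp only [hlam, Pi.neg_apply, neg_smul]
    abel
  set g : (Fin 2 → ℝ) → ℕ := fun c => (univ.filter fun i => 0 < lam c i).card with hg
  have hcont : ∀ i : Fin 7, Continuous fun d : Fin 2 → ℝ => lam d i := by
    intro i
    simp only [hlam, Pi.add_apply, Pi.smul_apply, smul_eq_mul]
    fun_prop
  -- the negative-coordinate count of `lam c` is `g (-c)`
  have hneg_count : ∀ c : Fin 2 → ℝ,
      (univ.filter fun i => lam c i < 0).card = g (-c) := by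
    intro c
    congr 1
    apply Finset.filter_congr
    intro i _
    rw [hlam_neg]
    simp
  have hopen : IsOpen {c : Fin 2 → ℝ | 4 ≤ g c} := by
    rw [isOpen_iff_mem_nhds]
    intro c hc
    have h1 : ∀ᶠ d in nhds c, ∀ i ∈ (univ.filter fun i => 0 < lam c i),
        0 < lam d i := by
      rw [Filter.eventually_all_finset]
      intro i hi
      have : IsOpen {d : Fin 2 → ℝ | 0 < lam d i} :=
        isOpen_lt continuous_const (hcont i)
      exact this.mem_nhds (by simpa using (mem_filter.mp hi).2)
    filter_upwards [h1] with d hd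
    refine le_trans hc ?_
    apply Finset.card_le_card
    intro i hi
    simp only [mem_filter, mem_univ, true_and] at hi ⊢
    exact hd i (by simpa using hi)
  by_contra hcon
  push_neg at hcon
  have hAB : ∀ c : Fin 2 → ℝ, c ≠ 0 → 4 ≤ g c ∨ 4 ≤ g (-c) := by
    intro c hc
    rcases le_or_gt 4 (g c) with h | h
    · exact Or.inl h
    · refine Or.inr ?_
      have h4 : (univ.filter fun i => 0 < (c 0 • l 0 + c 1 • l 1) i).card ≤ 3 := by
        show g c ≤ 3; omega
      have h5 : 3 < (univ.filter fun i => lam c i < 0).card :=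
        hcon c (hlam_ne c hc) h4
      rw [hneg_count] at h5; omega
  -- connectedness of ℝ² \ {0}
  have hconn : IsConnected ({0}ᶜ : Set (Fin 2 → ℝ)) := by
    apply isConnected_compl_singleton_of_one_lt_rank
    rw [rank_fun']
    norm_num
  set A : Set (Fin 2 → ℝ) := {c | 4 ≤ g c} with hA
  set B : Set (Fin 2 → ℝ) := {c | 4 ≤ g (-c)} with hB
  have hBopen : IsOpen B := hopen.preimage continuous_neg
  have hsub : ({0}ᶜ : Set (Fin 2 → ℝ)) ⊆ A ∪ B := by
    intro c hc
    exact hAB c hc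
  have hdisj : ∀ c : Fin 2 → ℝ, ¬ (c ∈ A ∧ c ∈ B) := by
    rintro c ⟨h1, h2⟩
    have hdj : Disjoint (univ.filter fun i => 0 < lam c i)
        (univ.filter fun i => 0 < lam (-c) i) := by
      rw [Finset.disjoint_left]
      intro i hi1 hi2
      simp only [mem_filter, mem_univ, true_and] at hi1 hi2
      rw [hlam_neg] at hi2
      simp only [Pi.neg_apply] at hi2
      linarith
    have hle := Finset.card_le_univ ((univ.filter fun i => 0 < lam c i) ∪
        (univ.filter fun i => 0 < lam (-c) i))
    rw [Finset.card_union_of_disjoint hdj] at hle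
    have e1 : (univ.filter fun i => 0 < lam c i).card = g c := rfl
    have e2 : (univ.filter fun i => 0 < lam (-c) i).card = g (-c) := rfl
    rw [e1, e2] at hle
    have h1' : 4 ≤ g c := h1
    have h2' : 4 ≤ g (-c) := h2
    have h7 : Fintype.card (Fin 7) = 7 := by simp
    omega
  have hc0 : (fun _ : Fin 2 => (1:ℝ)) ∈ ({0}ᶜ : Set (Fin 2 → ℝ)) := by
    simp only [Set.mem_compl_iff, Set.mem_singleton_iff]
    intro h
    have := congrFun h 0
    norm_num at this
  have hAne : (({0}ᶜ : Set (Fin 2 → ℝ)) ∩ A).Nonempty := by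
    rcases hsub hc0 with h | h
    · exact ⟨_, hc0, h⟩
    · refine ⟨-(fun _ : Fin 2 => (1:ℝ)), ?_, h⟩
      simp only [Set.mem_compl_iff, Set.mem_singleton_iff, neg_eq_zero]
      exact hc0
  have hBne : (({0}ᶜ : Set (Fin 2 → ℝ)) ∩ B).Nonempty := by
    rcases hsub hc0 with h | h
    · refine ⟨-(fun _ : Fin 2 => (1:ℝ)), ?_, ?_⟩
      · simp only [Set.mem_compl_iff, Set.mem_singleton_iff, neg_eq_zero]
        exact hc0
      · simpa [hA, hB, Set.mem_setOf_eq, neg_neg] using h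
    · exact ⟨_, hc0, h⟩
  obtain ⟨c, _, hcA, hcB⟩ := hconn.isPreconnected A B hopen hBopen hsub hAne hBne
  exact hdisj c ⟨hcA, hcB⟩

theorem van_kampen_flores (p : Fin 7 → (Fin 4 → ℝ)) :
    ∃ S T : Finset (Fin 7), S.card = 3 ∧ T.card = 3 ∧ Disjoint S T ∧
      (convexHull ℝ (p '' (S : Set (Fin 7))) ∩
        convexHull ℝ (p '' (T : Set (Fin 7)))).Nonempty := by
  classical
  set q : Fin 7 → (Fin 5 → ℝ) := fun i => Fin.snoc (p i) 1 with hq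
  set F : (Fin 7 → ℝ) →ₗ[ℝ] (Fin 5 → ℝ) :=
    { toFun := fun c => ∑ i, c i • q i
      map_add' := by intro a b; simp [add_smul, Finset.sum_add_distrib]
      map_smul' := by intro r a; simp [smul_smul, Finset.smul_sum] } with hF
  have hker : 2 ≤ Module.finrank ℝ (LinearMap.ker F) := by
    have h1 := LinearMap.finrank_range_add_finrank_ker F
    have h2 : Module.finrank ℝ (LinearMap.range F) ≤ Module.finrank ℝ (Fin 5 → ℝ) :=
      Submodule.finrank_le _
    have h3 : Module.finrank ℝ (Fin 5 → ℝ) = 5 := by simp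
    have h4 : Module.finrank ℝ (Fin 7 → ℝ) = 7 := by simp
    omega
  obtain ⟨f, hf⟩ := exists_linearIndependent_of_le_finrank hker
  set l : Fin 2 → (Fin 7 → ℝ) := fun i => (f i : Fin 7 → ℝ) with hldef
  have hl : LinearIndependent ℝ l :=
    hf.map' (LinearMap.ker F).subtype (Submodule.ker_subtype _)
  obtain ⟨c, hne, hpos, hneg⟩ := exists_balanced l hl
  set lam : Fin 7 → ℝ := c 0 • l 0 + c 1 • l 1 with hlam
  have hker_lam : lam ∈ LinearMap.ker F := by
    apply Submodule.add_mem
    · exact Submodule.smul_mem _ _ (f 0).2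
    · exact Submodule.smul_mem _ _ (f 1).2
  have hFlam : ∑ i, lam i • q i = 0 := LinearMap.mem_ker.mp hker_lam
  have hsum : ∑ i, lam i = 0 := by
    have := congrFun hFlam (Fin.last 4)
    simp only [Finset.sum_apply, Pi.smul_apply, hq, Fin.snoc_last, smul_eq_mul, mul_one,
      Pi.zero_apply] at this
    simpa using this
  have hsump : ∑ i, lam i • p i = 0 := by
    funext j
    have := congrFun hFlam (Fin.castSucc j)
    simpa [Finset.sum_apply, hq, Fin.snoc_castSucc] using this
  set P : Finset (Fin 7) := univ.filter fun i => 0 < lam i with hP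
  set N : Finset (Fin 7) := univ.filter fun i => lam i < 0 with hN
  have hPN_disj : Disjoint P N := by
    rw [Finset.disjoint_left]
    intro i hi1 hi2
    simp only [hP, hN, mem_filter, mem_univ, true_and] at hi1 hi2
    linarith
  have hzero : ∀ i, i ∉ P ∪ N → lam i = 0 := by
    intro i hi
    simp only [Finset.mem_union, hP, hN, mem_filter, mem_univ, true_and, not_or] at hi
    have := hi.1; have := hi.2
    linarith [not_lt.mp hi.1, not_lt.mp hi.2]
  have hPne : P.Nonempty := by
    by_contra h
    rw [Finset.not_nonempty_iff_eq_empty, Finset.filter_eq_empty_iff] at h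
    apply hne
    funext i
    have hall : ∀ j ∈ univ, lam j ≤ 0 := fun j _ => not_lt.mp (h (mem_univ j))
    exact (Finset.sum_eq_zero_iff_of_nonpos hall).mp hsum i (mem_univ i)
  have hNne : N.Nonempty := by
    by_contra h
    rw [Finset.not_nonempty_iff_eq_empty, Finset.filter_eq_empty_iff] at h
    apply hne
    funext i
    have hall : ∀ j ∈ univ, 0 ≤ lam j := fun j _ => not_lt.mp (h (mem_univ j))
    exact (Finset.sum_eq_zero_iff_of_nonneg hall).mp hsum i (mem_univ i)
  -- split the sums
  have hsum_split : ∑ i ∈ P, lam i + ∑ i ∈ N, lam i = 0 := by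
    have h1 : ∑ i ∈ P ∪ N, lam i = ∑ i, lam i :=
      Finset.sum_subset (Finset.subset_univ _) (fun i _ hi => hzero i hi)
    rw [Finset.sum_union hPN_disj] at h1
    rw [h1, hsum]
  have hsump_split : ∑ i ∈ P, lam i • p i + ∑ i ∈ N, lam i • p i = 0 := by
    have h1 : ∑ i ∈ P ∪ N, lam i • p i = ∑ i, lam i • p i :=
      Finset.sum_subset (Finset.subset_univ _)
        (fun i _ hi => by rw [hzero i hi, zero_smul])
    rw [Finset.sum_union hPN_disj] at h1
    rw [h1, hsump]
  have hs : 0 < ∑ i ∈ P, lam i :=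
    Finset.sum_pos (fun i hi => by
      simpa [hP, mem_filter] using (Finset.mem_filter.mp hi).2) hPne
  set x : Fin 4 → ℝ := P.centerMass lam p with hx
  have hx1 : x ∈ convexHull ℝ (p '' (P : Set (Fin 7))) := by
    apply Finset.centerMass_mem_convexHull
    · intro i hi
      exact le_of_lt (by simpa [hP, mem_filter] using (Finset.mem_filter.mp hi).2)
    · exact hs
    · intro i hi
      exact Set.mem_image_of_mem p (Finset.mem_coe.mpr hi)
  have hxN : x = N.centerMass (fun i => -lam i) p := by
    rw [hx, Finset.centerMass, Finset.centerMass]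
    have e1 : ∑ i ∈ N, -lam i = ∑ i ∈ P, lam i := by
      rw [Finset.sum_neg_distrib]; linarith
    have e2 : ∑ i ∈ N, -(lam i • p i) = ∑ i ∈ P, lam i • p i := by
      rw [Finset.sum_neg_distrib, neg_eq_iff_add_eq_zero, add_comm]
      exact hsump_split
    rw [e1]
    congr 1
    rw [← e2]
    apply Finset.sum_congr rfl
    intro i _
    rw [neg_smul]
  have hx2 : x ∈ convexHull ℝ (p '' (N : Set (Fin 7))) := by
    rw [hxN]
    apply Finset.centerMass_mem_convexHull
    · intro i hi
      have : lam i < 0 := by simpa [hN, mem_filter] using (Finset.mem_filter.mp hi).2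
      linarith
    · calc (0:ℝ) < ∑ i ∈ P, lam i := hs
        _ = ∑ i ∈ N, -lam i := by rw [Finset.sum_neg_distrib]; linarith
    · intro i hi
      exact Set.mem_image_of_mem p (Finset.mem_coe.mpr hi)
  -- pad P and N to triples
  have h7 : Fintype.card (Fin 7) = 7 := by simp
  have hPc : P.card ≤ 3 := hpos
  have hNc : N.card ≤ 3 := hneg
  have hPsubNc : P ⊆ Nᶜ := fun i hi =>
    Finset.mem_compl.mpr (Finset.disjoint_left.mp hPN_disj hi)
  obtain ⟨S, hPS, hSNc, hS3⟩ := Finset.exists_subsuperset_card_eq hPsubNc hPc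
    (by rw [Finset.card_compl]; omega)
  have hNsubSc : N ⊆ Sᶜ := by
    intro i hi
    rw [Finset.mem_compl]
    intro hiS
    exact absurd hi (Finset.mem_compl.mp (hSNc hiS))
  obtain ⟨T, hNT, hTSc, hT3⟩ := Finset.exists_subsuperset_card_eq hNsubSc hNc
    (by rw [Finset.card_compl]; omega)
  refine ⟨S, T, hS3, hT3, ?_, ⟨x, ?_, ?_⟩⟩
  · rw [Finset.disjoint_left]
    intro i hiS hiT
    exact Finset.mem_compl.mp (hTSc hiT) hiS
  · exact convexHull_mono (Set.image_mono (Finset.coe_subset.mpr hPS)) hx1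
  · exact convexHull_mono (Set.image_mono (Finset.coe_subset.mpr hNT)) hx2
end

section
/- If d+2 points in ℝ^d are in general position, P is one of them and α is a hyperplane strictly separating P from the others, then the projected points A′_i (intersections of segments P A_i with α, for the other d+1 points A_i) are d+1 points in the (d−1)-dimensional affine subspace α that are again in general position (every d of them affinely independent). -/
/-!
Since `f (A' i) = 0 ≠ f P`, each `A' i` is a point `P + tᵢ (A i - P)` of the segment with
`tᵢ ≠ 0`. Rescaling the vectors `A i - P` by nonzero scalars preserves their linear
independence, so `P` together with any `d` of the points `A' i` is affinely independent, and in
particular so are those `d` points.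
-/

theorem AffineIndependent.lineMap_of_isUnit {k V P ι : Type*} [Ring k] [AddCommGroup V]
    [Module k V] [AddTorsor V P] {p : ι → P} (hp : AffineIndependent k p) (i₀ : ι)
    {t : ι → k} (ht : ∀ i ≠ i₀, IsUnit (t i)) :
    AffineIndependent k fun i => AffineMap.lineMap (p i₀) (p i) (t i) := by
  rw [affineIndependent_iff_linearIndependent_vsub k _ i₀] at hp ⊢
  simp only [AffineMap.lineMap_same_apply, AffineMap.lineMap_vsub_left]
  exact hp.units_smul fun i => (ht i i.2).unit

theorem exists_lineMap_eq_of_mem_segment_of_ne {𝕜 E : Type*} [Ring 𝕜] [PartialOrder 𝕜]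
    [IsOrderedRing 𝕜] [AddCommGroup E] [Module 𝕜 E] {x y z : E} (hz : z ∈ segment 𝕜 x y)
    (hzx : z ≠ x) : ∃ t : 𝕜, t ≠ 0 ∧ AffineMap.lineMap x y t = z := by
  rw [segment_eq_image_lineMap] at hz
  obtain ⟨t, -, rfl⟩ := hz
  exact ⟨t, by rintro rfl; simp at hzx, rfl⟩

theorem projected_points_general_position_general (d : ℕ)
    (P : Fin d → ℝ) (A : Fin (d + 1) → (Fin d → ℝ))
    (hgen : ∀ s : Finset (Fin (d + 2)), s.card = d + 1 →
      AffineIndependent ℝ (fun i : s => (Fin.cons P A : Fin (d + 2) → (Fin d → ℝ)) i))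
    (f : (Fin d → ℝ) →ᵃ[ℝ] ℝ)
    (hP : f P < 0)
    (A' : Fin (d + 1) → (Fin d → ℝ))
    (hA' : ∀ i, A' i ∈ segment ℝ P (A i) ∧ f (A' i) = 0) :
    ∀ s : Finset (Fin (d + 1)), s.card = d →
      AffineIndependent ℝ (fun i : s => A' i) := by
  have hA'P : ∀ i, A' i ≠ P := fun i h => hP.ne (h ▸ (hA' i).2)
  choose t ht hA't using fun i => exists_lineMap_eq_of_mem_segment_of_ne (hA' i).1 (hA'P i)
  intro s hs
  let S : Finset (Fin (d + 2)) := .cons 0 (s.map (Fin.succEmb _)) (by simp)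
  have hzero_mem : 0 ∈ S := Finset.mem_cons_self _ _
  have hu : ∀ i, (Fin.cons 1 t : Fin (d + 2) → ℝ) i ≠ 0 := Fin.cases one_ne_zero ht
  have hscaled := (hgen S (by simp [S, hs])).lineMap_of_isUnit ⟨0, hzero_mem⟩
    fun i _ => (hu i).isUnit
  let succInS : s ↪ S :=
    ⟨fun i => ⟨i.1.succ, Finset.mem_cons_of_mem (Finset.mem_map_of_mem _ i.2)⟩,
      fun i j h => Subtype.ext (Fin.succ_injective _ (congrArg Subtype.val h))⟩
  convert hscaled.comp_embedding succInS with i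
  exact (hA't i).symm

theorem projected_points_general_position (d : ℕ) (hd : 1 ≤ d)
    (P : Fin d → ℝ) (A : Fin (d + 1) → (Fin d → ℝ))
    (hgen : ∀ s : Finset (Fin (d + 2)), s.card = d + 1 →
      AffineIndependent ℝ (fun i : s => (Fin.cons P A : Fin (d + 2) → (Fin d → ℝ)) i))
    (f : (Fin d → ℝ) →ᵃ[ℝ] ℝ)
    (hP : f P < 0) (hA : ∀ i, 0 < f (A i))
    (A' : Fin (d + 1) → (Fin d → ℝ))
    (hA' : ∀ i, A' i ∈ segment ℝ P (A i) ∧ f (A' i) = 0) :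
    ∀ s : Finset (Fin (d + 1)), s.card = d →
      AffineIndependent ℝ (fun i : s => A' i) :=
  projected_points_general_position_general d P A hgen f hP A' hA'
end
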